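/- With k₁ = -√6(c₁u+2c₀)/(12√c₀ u_x), k₂ = √6 c₁u/(12√c₀ u_x), k₃ = √6 u(4c₀u - c₁²)/(12c₁√c₀ u_x), and l₁, l₂, l₃ defined as specified differential functions of u, u_x, u_xx, u_xxx, the compatibility condition (p₁)_{xt} = (p₁)_{tx} for the system (p₁)_x = k₃p₁² + 2k₁p₁ - k₂, (p₁)_t = l₃p₁² + 2l₁p₁ - l₂ holds identically in p₁ by virtue of the Krichever–Novikov equation; equivalently D_t(k₃p₁²+2k₁p₁-k₂) - D_x(l₃p₁²+2l₁p₁-l₂) = 0 when derivatives of p₁ are replaced by the right-hand sides and u_t-derivatives by the KN equation. -/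

import Mathlib

noncomputable section

open Real

/-- Total `x`-derivative (on solutions: partial derivative in `x`). -/
def Dx (f : ℝ → ℝ → ℝ) : ℝ → ℝ → ℝ := fun x t => deriv (fun y => f y t) x

/-- Total `t`-derivative (on solutions: partial derivative in `t`). -/
def Dt (f : ℝ → ℝ → ℝ) : ℝ → ℝ → ℝ := fun x t => deriv (fun s => f x s) t

/-- The cubic polynomial `P(u) = u³ + c₁ u + c₀`. -/
def Pcub (c₀ c₁ v : ℝ) : ℝ := v ^ 3 + c₁ * v + c₀

/-- `P′(u) = 3u² + c₁`. -/
def Pder (c₁ v : ℝ) : ℝ := 3 * v ^ 2 + c₁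

/-- Right-hand side of the Krichever–Novikov equation. -/
def G1 (c₀ c₁ : ℝ) (u : ℝ → ℝ → ℝ) : ℝ → ℝ → ℝ := fun x t =>
  Dx (Dx (Dx u)) x t - (3 / 2) * (Dx (Dx u) x t) ^ 2 / Dx u x t
    + Pcub c₀ c₁ (u x t) / Dx u x t

/-- Fréchet derivative of `G₁` applied to `G`:
`(G₁)⋆(G) = Σ_k (∂G₁/∂u_{kx}) Dₓᵏ(G)` with the explicit partial derivatives
`∂G₁/∂u = P′/u_x`, `∂G₁/∂u_x = (3/2)u_xx²/u_x² - P/u_x²`,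
`∂G₁/∂u_xx = -3u_xx/u_x`, `∂G₁/∂u_xxx = 1`. -/
def FrG1 (c₀ c₁ : ℝ) (u G : ℝ → ℝ → ℝ) : ℝ → ℝ → ℝ := fun x t =>
  (Pder c₁ (u x t) / Dx u x t) * G x t
    + ((3 / 2) * (Dx (Dx u) x t) ^ 2 / (Dx u x t) ^ 2
        - Pcub c₀ c₁ (u x t) / (Dx u x t) ^ 2) * Dx G x t
    + (-(3 * Dx (Dx u) x t) / Dx u x t) * Dx (Dx G) x t
    + Dx (Dx (Dx G)) x t

/-- Coefficient `k₁` of the covering. -/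
def k1 (c₀ c₁ : ℝ) (u : ℝ → ℝ → ℝ) : ℝ → ℝ → ℝ := fun x t =>
  -(Real.sqrt 6 * (c₁ * u x t + 2 * c₀)) / (12 * Real.sqrt c₀ * Dx u x t)

/-- Coefficient `k₂` of the covering. -/
def k2 (c₀ c₁ : ℝ) (u : ℝ → ℝ → ℝ) : ℝ → ℝ → ℝ := fun x t =>
  Real.sqrt 6 * c₁ * u x t / (12 * Real.sqrt c₀ * Dx u x t)

/-- Coefficient `k₃` of the covering. -/
def k3 (c₀ c₁ : ℝ) (u : ℝ → ℝ → ℝ) : ℝ → ℝ → ℝ := fun x t =>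
  Real.sqrt 6 * u x t * (4 * c₀ * u x t - c₁ ^ 2) / (12 * c₁ * Real.sqrt c₀ * Dx u x t)

/-- Coefficient `m` of the covering. -/
def mco (c₀ c₁ : ℝ) (u : ℝ → ℝ → ℝ) : ℝ → ℝ → ℝ := fun x t =>
  2 * (c₁ ^ 2 - 8 * c₀ * u x t - 2 * c₁ * (u x t) ^ 2) / (3 * c₁ * Dx u x t)

/-- Coefficient `l₁` of the covering. -/
def l1 (c₀ c₁ : ℝ) (u : ℝ → ℝ → ℝ) : ℝ → ℝ → ℝ := fun x t =>
  -(Real.sqrt 6 / (72 * Real.sqrt c₀ * (Dx u x t) ^ 3)) *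
    (-(6 * c₁ * u x t * Dx u x t * Dx (Dx (Dx u)) x t)
      - 12 * c₀ * Dx u x t * Dx (Dx (Dx u)) x t
      + 3 * c₁ * u x t * (Dx (Dx u) x t) ^ 2 + 6 * c₀ * (Dx (Dx u) x t) ^ 2
      + 12 * c₁ * (Dx u x t) ^ 2 * Dx (Dx u) x t
      + 4 * Real.sqrt 6 * Real.sqrt c₀ * (u x t) ^ 2 * (Dx u x t) ^ 2
      - 2 * c₁ * (u x t) ^ 4 - 4 * c₀ * (u x t) ^ 3 - 2 * c₁ ^ 2 * (u x t) ^ 2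
      - 6 * c₀ * c₁ * u x t - 4 * c₀ ^ 2)

/-- Coefficient `l₂` of the covering. -/
def l2 (c₀ c₁ : ℝ) (u : ℝ → ℝ → ℝ) : ℝ → ℝ → ℝ := fun x t =>
  Real.sqrt 6 * c₁ / (72 * Real.sqrt c₀ * (Dx u x t) ^ 3) *
    (-(6 * u x t * Dx u x t * Dx (Dx (Dx u)) x t)
      + 3 * u x t * (Dx (Dx u) x t) ^ 2 + 12 * (Dx u x t) ^ 2 * Dx (Dx u) x t
      + 4 * Real.sqrt 6 * Real.sqrt c₀ * (Dx u x t) ^ 2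
      - 2 * (u x t) ^ 4 - 2 * c₁ * (u x t) ^ 2 - 2 * c₀ * u x t)

/-- Coefficient `l₃` of the covering. -/
def l3 (c₀ c₁ : ℝ) (u : ℝ → ℝ → ℝ) : ℝ → ℝ → ℝ := fun x t =>
  -(Real.sqrt 6 / (72 * c₁ * Real.sqrt c₀ * (Dx u x t) ^ 3)) *
    (-(6 * c₁ ^ 2 * u x t * Dx u x t * Dx (Dx (Dx u)) x t)
      + 24 * c₀ * (u x t) ^ 2 * Dx u x t * Dx (Dx (Dx u)) x t
      + 3 * c₁ ^ 2 * u x t * (Dx (Dx u) x t) ^ 2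
      - 12 * c₀ * (u x t) ^ 2 * (Dx (Dx u) x t) ^ 2
      + 12 * c₁ ^ 2 * (Dx u x t) ^ 2 * Dx (Dx u) x t
      - 96 * c₀ * u x t * (Dx u x t) ^ 2 * Dx (Dx u) x t
      + 96 * c₀ * (Dx u x t) ^ 4
      - 4 * Real.sqrt 6 * Real.sqrt c₀ * c₁ ^ 2 * (Dx u x t) ^ 2
      + 32 * Real.sqrt 6 * (c₀ * Real.sqrt c₀) * u x t * (Dx u x t) ^ 2
      + 8 * Real.sqrt 6 * Real.sqrt c₀ * c₁ * (u x t) ^ 2 * (Dx u x t) ^ 2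
      + 8 * c₀ * (u x t) ^ 5 - 2 * c₁ ^ 2 * (u x t) ^ 4 + 8 * c₀ * c₁ * (u x t) ^ 3
      - 2 * c₁ ^ 3 * (u x t) ^ 2 + 8 * c₀ ^ 2 * (u x t) ^ 2 - 2 * c₀ * c₁ ^ 2 * u x t)

/-- Right-hand side of `(p₁)_x = k₃p₁² + 2k₁p₁ - k₂`, as a function of `(x,t)`
and the nonlocal variable `pp = p₁`. -/
def Fp1x (c₀ c₁ : ℝ) (u : ℝ → ℝ → ℝ) : ℝ → ℝ → ℝ → ℝ := fun x t pp =>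
  k3 c₀ c₁ u x t * pp ^ 2 + 2 * k1 c₀ c₁ u x t * pp - k2 c₀ c₁ u x t

/-- Right-hand side of `(p₁)_t = l₃p₁² + 2l₁p₁ - l₂`. -/
def Fp1t (c₀ c₁ : ℝ) (u : ℝ → ℝ → ℝ) : ℝ → ℝ → ℝ → ℝ := fun x t pp =>
  l3 c₀ c₁ u x t * pp ^ 2 + 2 * l1 c₀ c₁ u x t * pp - l2 c₀ c₁ u x t

/-- Total `x`-derivative extended to the nonlocal variable `p₁` by its defining
equation: `D_x F = ∂_x F + (k₃pp² + 2k₁pp - k₂) ∂_pp F`. -/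
def DxExt (c₀ c₁ : ℝ) (u : ℝ → ℝ → ℝ) (F : ℝ → ℝ → ℝ → ℝ) : ℝ → ℝ → ℝ → ℝ :=
  fun x t pp => deriv (fun y => F y t pp) x
    + Fp1x c₀ c₁ u x t pp * deriv (fun rr => F x t rr) pp

/-- Total `t`-derivative extended to the nonlocal variable `p₁`:
`D_t F = ∂_t F + (l₃pp² + 2l₁pp - l₂) ∂_pp F`. -/
def DtExt (c₀ c₁ : ℝ) (u : ℝ → ℝ → ℝ) (F : ℝ → ℝ → ℝ → ℝ) : ℝ → ℝ → ℝ → ℝ :=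
  fun x t pp => deriv (fun s => F x s pp) t
    + Fp1t c₀ c₁ u x t pp * deriv (fun rr => F x t rr) pp


set_option maxHeartbeats 4000000


/-- auxiliary: first-coordinate partial derivative of a function on `ℝ × ℝ`. -/
def D1 (φ : ℝ × ℝ → ℝ) : ℝ × ℝ → ℝ := fun p => fderiv ℝ φ p (1, 0)

/-- auxiliary: second-coordinate partial derivative. -/
def D2' (φ : ℝ × ℝ → ℝ) : ℝ × ℝ → ℝ := fun p => fderiv ℝ φ p (0, 1)

lemma contDiff_D1 {φ : ℝ × ℝ → ℝ} (h : ContDiff ℝ (⊤ : ℕ∞) φ) : ContDiff ℝ (⊤ : ℕ∞) (D1 φ) :=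
  (h.fderiv_right (by simp)).clm_apply contDiff_const

lemma contDiff_D2 {φ : ℝ × ℝ → ℝ} (h : ContDiff ℝ (⊤ : ℕ∞) φ) : ContDiff ℝ (⊤ : ℕ∞) (D2' φ) :=
  (h.fderiv_right (by simp)).clm_apply contDiff_const

lemma hasDerivAt_sliceX {φ : ℝ × ℝ → ℝ} (h : Differentiable ℝ φ) (x t : ℝ) :
    HasDerivAt (fun y => φ (y, t)) (D1 φ (x, t)) x :=
  (h (x, t)).hasFDerivAt.comp_hasDerivAt x ((hasDerivAt_id x).prodMk (hasDerivAt_const x t))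

lemma hasDerivAt_sliceT {φ : ℝ × ℝ → ℝ} (h : Differentiable ℝ φ) (x t : ℝ) :
    HasDerivAt (fun s => φ (x, s)) (D2' φ (x, t)) t :=
  (h (x, t)).hasFDerivAt.comp_hasDerivAt t ((hasDerivAt_const t x).prodMk (hasDerivAt_id t))

lemma D2'_D1_comm {φ : ℝ × ℝ → ℝ} (h : ContDiff ℝ (⊤ : ℕ∞) φ) (p : ℝ × ℝ) :
    D2' (D1 φ) p = D1 (D2' φ) p := by
  have hd : Differentiable ℝ (fderiv ℝ φ) := (h.fderiv_right (m := (⊤ : ℕ∞)) (by simp)).differentiable (by simp)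
  have key : ∀ v w : ℝ × ℝ,
      fderiv ℝ (fun q => fderiv ℝ φ q v) p w = fderiv ℝ (fderiv ℝ φ) p w v := by
    intro v w
    have h1 : HasFDerivAt (fun q => (ContinuousLinearMap.apply ℝ ℝ v) (fderiv ℝ φ q))
        ((ContinuousLinearMap.apply ℝ ℝ v).comp (fderiv ℝ (fderiv ℝ φ) p)) p :=
      (ContinuousLinearMap.apply ℝ ℝ v).hasFDerivAt.comp p (hd p).hasFDerivAt
    simpa using congrFun (congrArg DFunLike.coe h1.fderiv) w
  have sym := second_derivative_symmetric (f := φ) (f' := fderiv ℝ φ)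
    (f'' := fderiv ℝ (fderiv ℝ φ) p)
    (fun y => (h.differentiable (by simp) y).hasFDerivAt) (hd p).hasFDerivAt
  show fderiv ℝ (fun q => fderiv ℝ φ q (1,0)) p (0,1)
      = fderiv ℝ (fun q => fderiv ℝ φ q (0,1)) p (1,0)
  rw [key, key, sym]

lemma hasDerivAt_congr_deriv {f : ℝ → ℝ} {a b x : ℝ} (h : HasDerivAt f a x) (e : a = b) :
    HasDerivAt f b x := e ▸ h

/-- The compatibility condition `(p₁)_{xt} = (p₁)_{tx}` for the
covering system holds identically in `p₁` by virtue of the Krichever–Novikov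
equation: `D_t(k₃p₁²+2k₁p₁-k₂) - D_x(l₃p₁²+2l₁p₁-l₂) = 0`, with derivatives of
`p₁` replaced by the right-hand sides. -/
theorem covering_p1_compatible (c₀ c₁ : ℝ) (hc₀ : 0 < c₀) (hc₁ : c₁ ≠ 0)
    (u : ℝ → ℝ → ℝ)
    (hu : ContDiff ℝ (⊤ : ℕ∞) (Function.uncurry u))
    (hux : ∀ x t, Dx u x t ≠ 0)
    (hKN : ∀ x t, Dt u x t = G1 c₀ c₁ u x t) :
    ∀ x t pp, DtExt c₀ c₁ u (Fp1x c₀ c₁ u) x t pp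
      - DxExt c₀ c₁ u (Fp1t c₀ c₁ u) x t pp = 0 := by
  intro x t pp
  set f := Function.uncurry u with hfdef
  have hfd : Differentiable ℝ f := hu.differentiable (by simp)
  have hf1 : ContDiff ℝ (⊤ : ℕ∞) (D1 f) := contDiff_D1 hu
  have hf2 : ContDiff ℝ (⊤ : ℕ∞) (D1 (D1 f)) := contDiff_D1 hf1
  have hf3 : ContDiff ℝ (⊤ : ℕ∞) (D1 (D1 (D1 f))) := contDiff_D1 hf2
  have hg : ContDiff ℝ (⊤ : ℕ∞) (D2' f) := contDiff_D2 hu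
  have E1 : ∀ a b, Dx u a b = D1 f (a, b) := fun a b => (hasDerivAt_sliceX hfd a b).deriv
  have E2 : ∀ a b, Dx (Dx u) a b = D1 (D1 f) (a, b) := by
    intro a b
    have e : (fun y => Dx u y b) = fun y => D1 f (y, b) := funext fun y => E1 y b
    show deriv (fun y => Dx u y b) a = _
    rw [e]; exact (hasDerivAt_sliceX (hf1.differentiable (by simp)) a b).deriv
  have E3 : ∀ a b, Dx (Dx (Dx u)) a b = D1 (D1 (D1 f)) (a, b) := by
    intro a b
    have e : (fun y => Dx (Dx u) y b) = fun y => D1 (D1 f) (y, b) := funext fun y => E2 y b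
    show deriv (fun y => Dx (Dx u) y b) a = _
    rw [e]; exact (hasDerivAt_sliceX (hf2.differentiable (by simp)) a b).deriv
  have ET : ∀ a b, Dt u a b = D2' f (a, b) := fun a b => (hasDerivAt_sliceT hfd a b).deriv
  have hu1 : Dx u x t ≠ 0 := hux x t
  have hsc : Real.sqrt c₀ ≠ 0 := (Real.sqrt_pos.2 hc₀).ne'
  have A0 : HasDerivAt (fun y => u y t) (Dx u x t) x := by
    rw [E1 x t]; exact hasDerivAt_sliceX hfd x t
  have A1 : HasDerivAt (fun y => Dx u y t) (Dx (Dx u) x t) x := by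
    rw [E2 x t]
    have e : (fun y => Dx u y t) = fun y => D1 f (y, t) := funext fun y => E1 y t
    rw [e]; exact hasDerivAt_sliceX (hf1.differentiable (by simp)) x t
  have A2 : HasDerivAt (fun y => Dx (Dx u) y t) (Dx (Dx (Dx u)) x t) x := by
    rw [E3 x t]
    have e : (fun y => Dx (Dx u) y t) = fun y => D1 (D1 f) (y, t) := funext fun y => E2 y t
    rw [e]; exact hasDerivAt_sliceX (hf2.differentiable (by simp)) x t
  have A3 : HasDerivAt (fun y => Dx (Dx (Dx u)) y t) (D1 (D1 (D1 (D1 f))) (x, t)) x := by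
    have e : (fun y => Dx (Dx (Dx u)) y t) = fun y => D1 (D1 (D1 f)) (y, t) :=
      funext fun y => E3 y t
    rw [e]; exact hasDerivAt_sliceX (hf3.differentiable (by simp)) x t
  have T0 : HasDerivAt (fun s => u x s) (D2' f (x, t)) t := hasDerivAt_sliceT hfd x t
  have T1 : HasDerivAt (fun s => Dx u x s) (D1 (D2' f) (x, t)) t := by
    have h := hasDerivAt_sliceT (hf1.differentiable (by simp)) x t
    have e : (fun s => Dx u x s) = fun s => D1 f (x, s) := funext fun s => E1 x s
    rw [e]; rw [D2'_D1_comm hu] at h; exact h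
  have hG1slice : HasDerivAt (fun y => G1 c₀ c₁ u y t) (D1 (D2' f) (x, t)) x := by
    have h := hasDerivAt_sliceX (hg.differentiable (by simp)) x t
    have e : (fun y => D2' f (y, t)) = fun y => G1 c₀ c₁ u y t :=
      funext fun y => ((ET y t).symm.trans (hKN y t))
    rw [e] at h; exact h
  set gv := D2' f (x, t) with hgveq
  set u4 := D1 (D1 (D1 (D1 f))) (x, t) with hu4eq
  set W : ℝ := u4 - 3 * (Dx (Dx u) x t) * (Dx (Dx (Dx u)) x t) / (Dx u x t) + 3 / 2 * (Dx (Dx u) x t) ^ 3 / (Dx u x t) ^ 2 + (3 * (u x t) ^ 2 + c₁) - ((u x t) ^ 3 + c₁ * (u x t) + c₀) * (Dx (Dx u) x t) / (Dx u x t) ^ 2 with hWeq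
  have hWc : HasDerivAt (fun y => G1 c₀ c₁ u y t) W x := by
    rw [hWeq]
    simp only [G1, Pcub]
    exact hasDerivAt_congr_deriv
      ((A3.sub (((A2.fun_pow 2).const_mul ((3:ℝ)/2)).div A1 hu1)).add
        ((((A0.fun_pow 3).add (A0.const_mul c₁)).add_const c₀).div A1 hu1))
      (by simp only [Pi.add_apply, Pi.sub_apply, Pi.mul_apply, Pi.pow_apply, Pi.neg_apply]; field_simp; ring)
  have hT1 : HasDerivAt (fun s => Dx u x s) W t := by
    rw [← hG1slice.unique hWc]; exact T1
  have hXt : HasDerivAt (fun s => Fp1x c₀ c₁ u x s pp)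
      ((Real.sqrt 6 * (8 * c₀ * (u x t) - c₁ ^ 2) * gv / (12 * c₁ * Real.sqrt c₀ * Dx u x t) - Real.sqrt 6 * (u x t) * (4 * c₀ * (u x t) - c₁ ^ 2) * W / (12 * c₁ * Real.sqrt c₀ * (Dx u x t) ^ 2)) * pp ^ 2 + 2 * (-(Real.sqrt 6 * c₁ * gv) / (12 * Real.sqrt c₀ * Dx u x t) + Real.sqrt 6 * (c₁ * u x t + 2 * c₀) * W / (12 * Real.sqrt c₀ * (Dx u x t) ^ 2)) * pp - (Real.sqrt 6 * c₁ * gv / (12 * Real.sqrt c₀ * Dx u x t) - Real.sqrt 6 * c₁ * (u x t) * W / (12 * Real.sqrt c₀ * (Dx u x t) ^ 2))) t := by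
    simp only [Fp1x, k1, k2, k3]
    exact hasDerivAt_congr_deriv
      ((((((T0.const_mul (Real.sqrt 6)).mul
            ((T0.const_mul (4 * c₀)).sub_const (c₁ ^ 2))).div
            (hT1.const_mul (12 * c₁ * Real.sqrt c₀))
            (by exact mul_ne_zero (mul_ne_zero (mul_ne_zero (by norm_num) hc₁) hsc) hu1)).mul_const
            (pp ^ 2)).add
        (((((((T0.const_mul c₁).add_const (2 * c₀)).const_mul (Real.sqrt 6)).neg).div
            (hT1.const_mul (12 * Real.sqrt c₀))
            (by exact mul_ne_zero (mul_ne_zero (by norm_num) hsc) hu1)).const_mul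
            (2:ℝ)).mul_const pp)).sub
        ((T0.const_mul (Real.sqrt 6 * c₁)).div
            (hT1.const_mul (12 * Real.sqrt c₀))
            (by exact mul_ne_zero (mul_ne_zero (by norm_num) hsc) hu1)))
      (by simp only [Pi.add_apply, Pi.sub_apply, Pi.mul_apply, Pi.pow_apply, Pi.neg_apply]; field_simp; ring)
  have h72 : (72:ℝ) * Real.sqrt c₀ * Dx u x t ^ 3 ≠ 0 :=
    mul_ne_zero (mul_ne_zero (by norm_num) hsc) (pow_ne_zero 3 hu1)
  have h72' : (72:ℝ) * c₁ * Real.sqrt c₀ * Dx u x t ^ 3 ≠ 0 :=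
    mul_ne_zero (mul_ne_zero (mul_ne_zero (by norm_num) hc₁) hsc) (pow_ne_zero 3 hu1)
  have hYx : HasDerivAt (fun y => Fp1t c₀ c₁ u y t pp)
      ((Real.sqrt 6 * (Dx (Dx u) x t) / (24 * c₁ * Real.sqrt c₀ * (Dx u x t) ^ 4) * (-(6 * c₁ ^ 2 * (u x t) * (Dx u x t) * (Dx (Dx (Dx u)) x t)) + 24 * c₀ * (u x t) ^ 2 * (Dx u x t) * (Dx (Dx (Dx u)) x t) + 3 * c₁ ^ 2 * (u x t) * (Dx (Dx u) x t) ^ 2 - 12 * c₀ * (u x t) ^ 2 * (Dx (Dx u) x t) ^ 2 + 12 * c₁ ^ 2 * (Dx u x t) ^ 2 * (Dx (Dx u) x t) - 96 * c₀ * (u x t) * (Dx u x t) ^ 2 * (Dx (Dx u) x t) + 96 * c₀ * (Dx u x t) ^ 4 - 4 * Real.sqrt 6 * Real.sqrt c₀ * c₁ ^ 2 * (Dx u x t) ^ 2 + 32 * Real.sqrt 6 * c₀ * Real.sqrt c₀ * (u x t) * (Dx u x t) ^ 2 + 8 * Real.sqrt 6 * Real.sqrt c₀ * c₁ * (u x t)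 ^ 2 * (Dx u x t) ^ 2 + 8 * c₀ * (u x t) ^ 5 - 2 * c₁ ^ 2 * (u x t) ^ 4 + 8 * c₀ * c₁ * (u x t) ^ 3 - 2 * c₁ ^ 3 * (u x t) ^ 2 + 8 * c₀ ^ 2 * (u x t) ^ 2 - 2 * c₀ * c₁ ^ 2 * (u x t)) - Real.sqrt 6 / (72 * c₁ * Real.sqrt c₀ * (Dx u x t) ^ 3) * (-(6 * c₁ ^ 2 * ((Dx u x t) ^ 2 * (Dx (Dx (Dx u)) x t) + (u x t) * (Dx (Dx u) x t) * (Dx (Dx (Dx u)) x t) + (u x t) * (Dx u x t) * u4)) + 24 * c₀ * (2 * (u x t) * (Dx u x t) ^ 2 * (Dx (Dx (Dx u)) x t) + (u x t) ^ 2 * (Dx (Dx u) x t) * (Dx (Dx (Dx u)) x t) + (u x t) ^ 2 * (Dx u x t) * u4) + 3 * c₁ ^ 2 * ((Dx u x t) * (Dx (Dx u) x t) ^ 2 + 2 * (u x t) * (Dx (Dx u) x t) * (Dx (Dx (Dx u)) x t)) - 12 * c₀ * (2 * (u x t) * (Dx u x t) * (Dx (Dx u) x t) ^ 2 + 2 *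 (u x t) ^ 2 * (Dx (Dx u) x t) * (Dx (Dx (Dx u)) x t)) + 12 * c₁ ^ 2 * (2 * (Dx u x t) * (Dx (Dx u) x t) ^ 2 + (Dx u x t) ^ 2 * (Dx (Dx (Dx u)) x t)) - 96 * c₀ * ((Dx u x t) ^ 3 * (Dx (Dx u) x t) + 2 * (u x t) * (Dx u x t) * (Dx (Dx u) x t) ^ 2 + (u x t) * (Dx u x t) ^ 2 * (Dx (Dx (Dx u)) x t)) + 384 * c₀ * (Dx u x t) ^ 3 * (Dx (Dx u) x t) - 8 * Real.sqrt 6 * Real.sqrt c₀ * c₁ ^ 2 * (Dx u x t) * (Dx (Dx u) x t) + 32 * Real.sqrt 6 * c₀ * Real.sqrt c₀ * ((Dx u x t) ^ 3 + 2 * (u x t) * (Dx u x t) * (Dx (Dx u) x t)) + 8 * Real.sqrt 6 * Real.sqrt c₀ * c₁ * (2 * (u x t) * (Dx u x t) ^ 3 + 2 * (u x t) ^ 2 * (Dx u x t) * (Dx (Dx u) x t)) + 40 * c₀ * (u x t) ^ 4 * (Dx u x t) - 8 * c₁ ^ 2 * (u x t) ^ 3 * (Dx u x t) + 24 * c₀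 * c₁ * (u x t) ^ 2 * (Dx u x t) - 4 * c₁ ^ 3 * (u x t) * (Dx u x t) + 16 * c₀ ^ 2 * (u x t) * (Dx u x t) - 2 * c₀ * c₁ ^ 2 * (Dx u x t))) * pp ^ 2 + 2 * (Real.sqrt 6 * (Dx (Dx u) x t) / (24 * Real.sqrt c₀ * (Dx u x t) ^ 4) * (-(6 * c₁ * (u x t) * (Dx u x t) * (Dx (Dx (Dx u)) x t)) - 12 * c₀ * (Dx u x t) * (Dx (Dx (Dx u)) x t) + 3 * c₁ * (u x t) * (Dx (Dx u) x t) ^ 2 + 6 * c₀ * (Dx (Dx u) x t) ^ 2 + 12 * c₁ * (Dx u x t) ^ 2 * (Dx (Dx u) x t) + 4 * Real.sqrt 6 * Real.sqrt c₀ * (u x t) ^ 2 * (Dx u x t) ^ 2 - 2 * c₁ * (u x t) ^ 4 - 4 * c₀ * (u x t) ^ 3 - 2 * c₁ ^ 2 * (u x t) ^ 2 - 6 * c₀ * c₁ * (u x t) - 4 * c₀ ^ 2) - Real.sqrt 6 / (72 * Real.sqrt c₀ * (Dx u x t) ^ 3) * (-(6 * c₁ * ((Dx u x t) ^ 2 *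 (Dx (Dx (Dx u)) x t) + (u x t) * (Dx (Dx u) x t) * (Dx (Dx (Dx u)) x t) + (u x t) * (Dx u x t) * u4)) - 12 * c₀ * ((Dx (Dx u) x t) * (Dx (Dx (Dx u)) x t) + (Dx u x t) * u4) + 3 * c₁ * ((Dx u x t) * (Dx (Dx u) x t) ^ 2 + 2 * (u x t) * (Dx (Dx u) x t) * (Dx (Dx (Dx u)) x t)) + 12 * c₀ * (Dx (Dx u) x t) * (Dx (Dx (Dx u)) x t) + 12 * c₁ * (2 * (Dx u x t) * (Dx (Dx u) x t) ^ 2 + (Dx u x t) ^ 2 * (Dx (Dx (Dx u)) x t)) + 4 * Real.sqrt 6 * Real.sqrt c₀ * (2 * (u x t) * (Dx u x t) ^ 3 + 2 * (u x t) ^ 2 * (Dx u x t) * (Dx (Dx u) x t)) - 8 * c₁ * (u x t) ^ 3 * (Dx u x t) - 12 * c₀ * (u x t) ^ 2 * (Dx u x t) - 4 * c₁ ^ 2 * (u x t) * (Dx u x t) - 6 * c₀ * c₁ * (Dx u x t))) * pp - (-(3 * Real.sqrt 6 * c₁ * (Dx (Dx u) x t)) / (72 * Real.sqrt c₀ * (Dx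 u x t) ^ 4) * (-(6 * (u x t) * (Dx u x t) * (Dx (Dx (Dx u)) x t)) + 3 * (u x t) * (Dx (Dx u) x t) ^ 2 + 12 * (Dx u x t) ^ 2 * (Dx (Dx u) x t) + 4 * Real.sqrt 6 * Real.sqrt c₀ * (Dx u x t) ^ 2 - 2 * (u x t) ^ 4 - 2 * c₁ * (u x t) ^ 2 - 2 * c₀ * (u x t)) + Real.sqrt 6 * c₁ / (72 * Real.sqrt c₀ * (Dx u x t) ^ 3) * (-(6 * ((Dx u x t) ^ 2 * (Dx (Dx (Dx u)) x t) + (u x t) * (Dx (Dx u) x t) * (Dx (Dx (Dx u)) x t) + (u x t) * (Dx u x t) * u4)) + 3 * ((Dx u x t) * (Dx (Dx u) x t) ^ 2 + 2 * (u x t) * (Dx (Dx u) x t) * (Dx (Dx (Dx u)) x t)) + 12 * (2 * (Dx u x t) * (Dx (Dx u) x t) ^ 2 + (Dx u x t) ^ 2 * (Dx (Dx (Dx u)) x t)) + 8 * Real.sqrt 6 * Real.sqrt c₀ * (Dx u x t) * (Dx (Dx u) x t) - 8 * (u x t) ^ 3 * (Dx u x t) - 4 * c₁ * (u x t) * (Dx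 u x t) - 2 * c₀ * (Dx u x t)))) x := by
    simp only [Fp1t, l1, l2, l3]
    have cf3 := ((hasDerivAt_const x (Real.sqrt 6)).div
      ((A1.fun_pow 3).const_mul (72 * c₁ * Real.sqrt c₀)) h72').neg
    have cf1 := ((hasDerivAt_const x (Real.sqrt 6)).div
      ((A1.fun_pow 3).const_mul (72 * Real.sqrt c₀)) h72).neg
    have cf2 := (hasDerivAt_const x (Real.sqrt 6 * c₁)).div
      ((A1.fun_pow 3).const_mul (72 * Real.sqrt c₀)) h72
    have n3 := ((((((((((((((((((A0.const_mul (6 * c₁ ^ 2)).mul A1).mul A3).neg).add ((((A0.fun_pow 2).const_mul (24 * c₀)).mul A1).mul A3)).add ((A0.const_mul (3 * c₁ ^ 2)).mul (A2.fun_pow 2))).sub (((A0.fun_pow 2).const_mul (12 * c₀)).mul (A2.fun_pow 2))).add (((A1.fun_pow 2).const_mul (12 * c₁ ^ 2)).mul A2)).sub (((A0.const_mul (96 * c₀)).mul (A1.fun_pow 2)).mul A2)).add ((A1.fun_pow 4).const_mul (96 * c₀))).sub ((A1.fun_pow 2).const_mul (4 * Real.sqrt 6 * Real.sqrt c₀ *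 c₁ ^ 2))).add ((A0.const_mul (32 * Real.sqrt 6 * (c₀ * Real.sqrt c₀))).mul (A1.fun_pow 2))).add (((A0.fun_pow 2).const_mul (8 * Real.sqrt 6 * Real.sqrt c₀ * c₁)).mul (A1.fun_pow 2))).add ((A0.fun_pow 5).const_mul (8 * c₀))).sub ((A0.fun_pow 4).const_mul (2 * c₁ ^ 2))).add ((A0.fun_pow 3).const_mul (8 * c₀ * c₁))).sub ((A0.fun_pow 2).const_mul (2 * c₁ ^ 3))).add ((A0.fun_pow 2).const_mul (8 * c₀ ^ 2))).sub (A0.const_mul (2 * c₀ * c₁ ^ 2))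
    have n1 := (((((((((((((A0.const_mul (6 * c₁)).mul A1).mul A3).neg).sub ((A1.const_mul (12 * c₀)).mul A3)).add ((A0.const_mul (3 * c₁)).mul (A2.fun_pow 2))).add ((A2.fun_pow 2).const_mul (6 * c₀))).add (((A1.fun_pow 2).const_mul (12 * c₁)).mul A2)).add (((A0.fun_pow 2).const_mul (4 * Real.sqrt 6 * Real.sqrt c₀)).mul (A1.fun_pow 2))).sub ((A0.fun_pow 4).const_mul (2 * c₁))).sub ((A0.fun_pow 3).const_mul (4 * c₀))).sub ((A0.fun_pow 2).const_mul (2 * c₁ ^ 2))).sub (A0.const_mul (6 * c₀ * c₁))).sub_const (4 * c₀ ^ 2)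
    have n2 := (((((((((A0.const_mul 6).mul A1).mul A3).neg).add ((A0.const_mul 3).mul (A2.fun_pow 2))).add (((A1.fun_pow 2).const_mul 12).mul A2)).add ((A1.fun_pow 2).const_mul (4 * Real.sqrt 6 * Real.sqrt c₀))).sub ((A0.fun_pow 4).const_mul 2)).sub ((A0.fun_pow 2).const_mul (2 * c₁))).sub (A0.const_mul (2 * c₀))
    exact hasDerivAt_congr_deriv
      ((((cf3.mul n3).mul_const (pp ^ 2)).add
        (((cf1.mul n1).const_mul (2:ℝ)).mul_const pp)).sub (cf2.mul n2))
      (by simp only [Pi.add_apply, Pi.sub_apply, Pi.mul_apply, Pi.pow_apply, Pi.neg_apply, Nat.cast_ofNat]; norm_num; field_simp; ring)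
  have hPx : HasDerivAt (fun rr => Fp1x c₀ c₁ u x t rr)
      (2 * k3 c₀ c₁ u x t * pp + 2 * k1 c₀ c₁ u x t) pp := by
    simp only [Fp1x]
    exact hasDerivAt_congr_deriv
      ((((hasDerivAt_pow 2 pp).const_mul (k3 c₀ c₁ u x t)).add
        ((hasDerivAt_id pp).const_mul (2 * k1 c₀ c₁ u x t))).sub_const (k2 c₀ c₁ u x t))
      (by push_cast; ring)
  have hPt : HasDerivAt (fun rr => Fp1t c₀ c₁ u x t rr)
      (2 * l3 c₀ c₁ u x t * pp + 2 * l1 c₀ c₁ u x t) pp := by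
    simp only [Fp1t]
    exact hasDerivAt_congr_deriv
      ((((hasDerivAt_pow 2 pp).const_mul (l3 c₀ c₁ u x t)).add
        ((hasDerivAt_id pp).const_mul (2 * l1 c₀ c₁ u x t))).sub_const (l2 c₀ c₁ u x t))
      (by push_cast; ring)
  have hgv2 : gv = Dx (Dx (Dx u)) x t - 3 / 2 * Dx (Dx u) x t ^ 2 / Dx u x t
      + ((u x t) ^ 3 + c₁ * u x t + c₀) / Dx u x t := by
    have h := (hgveq.trans ((ET x t).symm.trans (hKN x t)))
    simpa only [G1, Pcub] using h
  simp only [DtExt, DxExt]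
  rw [hXt.deriv, hYx.deriv, hPx.deriv, hPt.deriv]
  simp only [Fp1x, Fp1t, k1, k2, k3, l1, l2, l3]
  rw [hgv2, hWeq]
  have h6 : Real.sqrt 6 ^ 2 = 6 := Real.sq_sqrt (by norm_num)
  have hc2 : Real.sqrt c₀ ^ 2 = c₀ := Real.sq_sqrt hc₀.le
  generalize hSg : Real.sqrt 6 = S at h6 ⊢
  generalize hCg : Real.sqrt c₀ = C at hc2 hsc ⊢
  subst hc2
  have h63 : S ^ 3 = 6 * S := by
    have : S ^ 3 = S ^ 2 * S := by ring
    rw [this, h6]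
  have h64 : S ^ 4 = 36 := by
    have : S ^ 4 = S ^ 2 * S ^ 2 := by ring
    rw [this, h6]; norm_num
  have h65 : S ^ 5 = 36 * S := by
    have : S ^ 5 = S ^ 2 * S ^ 2 * S := by ring
    rw [this, h6]; norm_num
  have h66 : S ^ 6 = 216 := by
    have : S ^ 6 = S ^ 2 * S ^ 2 * S ^ 2 := by ring
    rw [this, h6]; norm_num
  field_simp
  ring_nf
  simp only [h6, h63, h64, h65, h66]
  ring
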